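/- arXiv:1506.07824 — 5 statements merged into one kernel-verified Lean document; each statement's English description precedes it below -/
import Mathlib

section
/- Let k ≥ 1 and b^k ≤ n ≤ b^{k+1} with n ≢ 1 (mod b). Then there exists an integer n' with b^{k-1} ≤ n' ≤ b^k such that s_b(n) = s_b(n'). -/
theorem stmt_7 (b : ℕ) (hb : 2 ≤ b) (s : ℕ → ℕ)
    (hs0 : s 0 = 0) (hs1 : s 1 = 1)
    (hmul : ∀ n : ℕ, 1 ≤ n → s (b * n) = s n)
    (hone : ∀ n : ℕ, 1 ≤ n → s (b * n + 1) = s n + s (n + 1))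
    (hmid : ∀ n : ℕ, 1 ≤ n → ∀ i : ℕ, 2 ≤ i → i ≤ b - 1 → s (b * n + i) = s (n + 1))
    (k n : ℕ) (hk : 1 ≤ k) (hn1 : b ^ k ≤ n) (hn2 : n ≤ b ^ (k + 1))
    (hmod : ¬ n ≡ 1 [MOD b]) :
    ∃ n' : ℕ, b ^ (k - 1) ≤ n' ∧ n' ≤ b ^ k ∧ s n = s n' := by
  have hb0 : 0 < b := by omega
  obtain ⟨k', rfl⟩ : ∃ k', k = k' + 1 := ⟨k - 1, by omega⟩
  set q := n / b with hq
  set i := n % b with hi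
  have hdm : b * q + i = n := Nat.div_add_mod n b
  have hilt : i < b := Nat.mod_lt _ hb0
  have hi1 : i ≠ 1 := by
    intro h
    exact hmod (by unfold Nat.ModEq; rw [← hi, h, Nat.one_mod_eq_one.mpr (by omega)])
  have hpk : b ^ (k' + 1) = b * b ^ k' := by ring
  have hpk1 : b ^ (k' + 1 + 1) = b * b ^ (k' + 1) := by ring
  have hql : b ^ k' ≤ q := by
    rw [hq, Nat.le_div_iff_mul_le hb0]
    calc b ^ k' * b = b ^ (k' + 1) := by ring
    _ ≤ n := hn1
  have hqu : q ≤ b ^ (k' + 1) := by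
    have : n / b ≤ b ^ (k' + 1 + 1) / b := Nat.div_le_div_right hn2
    rwa [hpk1, Nat.mul_div_cancel_left _ hb0] at this
  have hq1 : 1 ≤ q := le_trans (Nat.one_le_pow _ _ hb0) hql
  simp only [Nat.add_sub_cancel]
  rcases Nat.eq_zero_or_pos i with h0 | hpos
  · refine ⟨q, hql, hqu, ?_⟩
    rw [← hdm, h0, Nat.add_zero, hmul q hq1]
  · have hi2 : 2 ≤ i := by omega
    have hqlt : q < b ^ (k' + 1) := by
      have : b * q < b * b ^ (k' + 1) := by
        rw [← hpk1]; omega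
      exact Nat.lt_of_mul_lt_mul_left this
    refine ⟨q + 1, by omega, by omega, ?_⟩
    rw [← hdm, hmid q hq1 i hi2 (by omega)]
end

section
/- Let a_t a_{t-1} ⋯ a_0 be the ordinary base b expansion of a positive integer n (digits in {0,...,b-1}, a_t ≠ 0), and let c_ℓ ⋯ c_0 be any base b over-expansion of n (digits in {0,...,b}, c_ℓ ≠ 0, with Σ c_i b^i = n), extending c_i = 0 for ℓ < i ≤ t. Then for each m ∈ {0,...,t}: c_m ∈ {0, b-1, b} if a_m = 0; c_m ∈ {0, 1, b} if a_m = 1; and c_m ∈ {a_m - 1, a_m} otherwise. -/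
theorem stmt_10 (b : ℕ) (hb : 2 ≤ b) (n : ℕ) (hn : 1 ≤ n)
    (t : ℕ) (a : ℕ → ℕ)
    (ha_digit : ∀ i, a i < b) (ha_lead : a t ≠ 0) (ha_zero : ∀ i, t < i → a i = 0)
    (ha_sum : ∑ i ∈ Finset.range (t + 1), a i * b ^ i = n)
    (l : ℕ) (c : ℕ → ℕ)
    (hc_digit : ∀ i, c i ≤ b) (hc_lead : c l ≠ 0) (hc_zero : ∀ i, l < i → c i = 0)
    (hc_sum : ∑ i ∈ Finset.range (l + 1), c i * b ^ i = n)
    (m : ℕ) (hm : m ≤ t) :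
    (a m = 0 → c m = 0 ∨ c m = b - 1 ∨ c m = b) ∧
    (a m = 1 → c m = 0 ∨ c m = 1 ∨ c m = b) ∧
    (2 ≤ a m → c m = a m - 1 ∨ c m = a m) := by
  have hb0 : 0 < b := by omega
  have hP0 : 0 < b ^ m := pow_pos hb0 m
  have hB0 : 0 < b ^ (m + 1) := pow_pos hb0 (m + 1)
  -- bound on partial a-sums
  have hab : ∀ k, (∑ i ∈ Finset.range k, a i * b ^ i) < b ^ k := by
    intro k
    induction k with
    | zero => simp
    | succ k ih =>
      rw [Finset.sum_range_succ, pow_succ]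
      have h1 : (a k + 1) * b ^ k ≤ b * b ^ k :=
        Nat.mul_le_mul_right _ (ha_digit k)
      nlinarith
  -- bound on partial c-sums
  have hcb : ∀ k, (∑ i ∈ Finset.range k, c i * b ^ i) < 2 * b ^ k := by
    intro k
    induction k with
    | zero => simp
    | succ k ih =>
      rw [Finset.sum_range_succ, pow_succ]
      have h1 : c k * b ^ k ≤ b * b ^ k := Nat.mul_le_mul_right _ (hc_digit k)
      have h2 : 2 * b ^ k ≤ b * b ^ k := Nat.mul_le_mul_right _ hb
      nlinarith
  set A := ∑ i ∈ Finset.range m, a i * b ^ i with hA_def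
  set S := ∑ i ∈ Finset.range m, c i * b ^ i with hS_def
  have hA : A < b ^ m := hab m
  have hSb : S < 2 * b ^ m := hcb m
  -- extend c-sum to range (M+1)
  set M := max l m with hM
  have hcsum' : ∑ i ∈ Finset.range (M + 1), c i * b ^ i = n := by
    rw [← hc_sum]
    symm
    apply Finset.sum_subset (Finset.range_subset_range.mpr (by omega))
    intro x hx hnx
    have hlx : l < x := by
      simp only [Finset.mem_range] at hx hnx; omega
    simp [hc_zero x hlx]
  -- split sums at m+1
  have hsplitA := Finset.sum_Ico_consecutive (fun i => a i * b ^ i)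
      (Nat.zero_le (m + 1)) (by omega : m + 1 ≤ t + 1)
  have hsplitC := Finset.sum_Ico_consecutive (fun i => c i * b ^ i)
      (Nat.zero_le (m + 1)) (by omega : m + 1 ≤ M + 1)
  simp only [← Finset.range_eq_Ico] at hsplitA hsplitC
  have hdA : b ^ (m + 1) ∣ ∑ i ∈ Finset.Ico (m + 1) (t + 1), a i * b ^ i :=
    Finset.dvd_sum fun i hi =>
      Dvd.dvd.mul_left (pow_dvd_pow b (Finset.mem_Ico.mp hi).1) _
  have hdC : b ^ (m + 1) ∣ ∑ i ∈ Finset.Ico (m + 1) (M + 1), c i * b ^ i :=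
    Finset.dvd_sum fun i hi =>
      Dvd.dvd.mul_left (pow_dvd_pow b (Finset.mem_Ico.mp hi).1) _
  obtain ⟨ka, hka⟩ := hdA
  obtain ⟨kc, hkc⟩ := hdC
  have hEA : n = A + a m * b ^ m + b ^ (m + 1) * ka := by
    rw [← ha_sum, ← hsplitA, hka, Finset.sum_range_succ]
  have hEC : n = S + c m * b ^ m + b ^ (m + 1) * kc := by
    rw [← hcsum', ← hsplitC, hkc, Finset.sum_range_succ]
  have hHA : A + a m * b ^ m < b ^ (m + 1) := by
    have := hab (m + 1)
    rwa [Finset.sum_range_succ] at this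
  have hmodA : n % b ^ (m + 1) = A + a m * b ^ m := by
    rw [hEA, Nat.add_mul_mod_self_left]
    exact Nat.mod_eq_of_lt hHA
  have hcc : (S + c m * b ^ m) % b ^ (m + 1) = A + a m * b ^ m := by
    rw [← hmodA, hEC, Nat.add_mul_mod_self_left]
  have hC2 : S + c m * b ^ m < 2 * b ^ (m + 1) := by
    have h1 : c m * b ^ m ≤ b * b ^ m := Nat.mul_le_mul_right _ (hc_digit m)
    have h2 : 2 * b ^ m ≤ b * b ^ m := Nat.mul_le_mul_right _ hb
    rw [pow_succ]
    nlinarith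
  have hE : S + c m * b ^ m = A + a m * b ^ m ∨
      S + c m * b ^ m = A + a m * b ^ m + b ^ (m + 1) := by
    by_cases hlt : S + c m * b ^ m < b ^ (m + 1)
    · exact Or.inl (by rw [← hcc, Nat.mod_eq_of_lt hlt])
    · push_neg at hlt
      right
      have hsub : S + c m * b ^ m - b ^ (m + 1) < b ^ (m + 1) :=
        (tsub_lt_iff_left hlt).mpr (by linarith)
      have h4 : (S + c m * b ^ m) % b ^ (m + 1)
          = S + c m * b ^ m - b ^ (m + 1) := by
        rw [Nat.mod_eq_sub_mod hlt, Nat.mod_eq_of_lt hsub]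
      have h5 : S + c m * b ^ m - b ^ (m + 1) = A + a m * b ^ m := by
        rw [← h4, hcc]
      exact (Nat.eq_add_of_sub_eq hlt h5).trans (by ring)
  obtain ⟨f, hf, hEf⟩ : ∃ f, (f = a m ∨ f = a m + b) ∧
      S + c m * b ^ m = A + f * b ^ m := by
    rcases hE with h | h
    · exact ⟨a m, Or.inl rfl, h⟩
    · refine ⟨a m + b, Or.inr rfl, ?_⟩
      rw [h, pow_succ]; ring
  have hSA : S % b ^ m = A := by
    have h6 := congrArg (· % b ^ m) hEf
    simpa [Nat.add_mul_mod_self_right, Nat.mod_eq_of_lt hA] using h6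
  have hdm : b ^ m * (S / b ^ m) + A = S := by
    conv_rhs => rw [← Nat.div_add_mod S (b ^ m)]
    rw [hSA]
  have hx1 : S / b ^ m ≤ 1 := by
    have h7 : S / b ^ m < 2 := Nat.div_lt_of_lt_mul (by linarith)
    omega
  have hkey : S / b ^ m + c m = f := by
    have h5 : (S / b ^ m + c m) * b ^ m = f * b ^ m := by
      rw [← hdm] at hEf
      ring_nf at hEf ⊢
      linarith
    exact Nat.eq_of_mul_eq_mul_right hP0 h5
  have hu : c m ≤ b := hc_digit m
  have hv : a m < b := ha_digit m
  obtain ⟨x, hx, hk⟩ : ∃ x, x ≤ 1 ∧ x + c m = f := ⟨S / b ^ m, hx1, hkey⟩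
  rcases hf with hf | hf <;> subst hf <;>
    refine ⟨fun h => ?_, fun h => ?_, fun h => ?_⟩ <;> omega
end

section
/- For any positive integers t and x with t ≥ ⌊log₂ x⌋ + 2, s₂(2^t + x) ≤ s₂(x)·(t + 1 - ⌊log₂ x⌋), where s₂ is Stern's diatomic sequence. -/
lemma lemA (s : ℕ → ℕ) (hs0 : s 0 = 0) (hs1 : s 1 = 1)
    (heven : ∀ n : ℕ, s (2 * n) = s n)
    (hodd : ∀ n : ℕ, s (2 * n + 1) = s n + s (n + 1)) :
    ∀ n x, x ≤ 2 ^ n → s (2 ^ n + x) = s x + s (2 ^ n - x) := by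
  intro n
  induction n with
  | zero =>
    intro x hx
    interval_cases x
    · simpa [hs0, hs1] using hs1
    · have h2 : s 2 = s 1 := by simpa using heven 1
      simp [hs0, hs1, h2]
  | succ n ih =>
    intro x hx
    have hp : (2:ℕ) ^ (n+1) = 2 * 2 ^ n := by rw [pow_succ]; ring
    rcases Nat.even_or_odd x with ⟨m, hm⟩ | ⟨m, hm⟩
    · subst hm
      have hm2 : m ≤ 2 ^ n := by omega
      have e1 : 2 ^ (n+1) + (m + m) = 2 * (2 ^ n + m) := by omega
      have e2 : 2 ^ (n+1) - (m + m) = 2 * (2 ^ n - m) := by omega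
      have e3 : m + m = 2 * m := by ring
      rw [e1, e2, e3, heven, heven, heven, ih m hm2]
    · subst hm
      have hm2 : m + 1 ≤ 2 ^ n := by omega
      have e1 : 2 ^ (n+1) + (2 * m + 1) = 2 * (2 ^ n + m) + 1 := by omega
      have e2 : 2 ^ (n+1) - (2 * m + 1) = 2 * (2 ^ n - (m+1)) + 1 := by omega
      rw [e1, e2, hodd, hodd, hodd]
      have e3 : 2 ^ n + m + 1 = 2 ^ n + (m + 1) := by omega
      have e4 : 2 ^ n - (m + 1) + 1 = 2 ^ n - m := by omega
      rw [e3, e4, ih m (by omega), ih (m+1) hm2]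
      have e5 : 2 ^ n - (m + 1) = 2 ^ n - m - 1 := by omega
      rw [e5]
      ring

lemma lemB (s : ℕ → ℕ) (hs0 : s 0 = 0) (hs1 : s 1 = 1)
    (heven : ∀ n : ℕ, s (2 * n) = s n)
    (hodd : ∀ n : ℕ, s (2 * n + 1) = s n + s (n + 1)) :
    ∀ L x, 2 ^ L ≤ x → x ≤ 2 ^ (L+1) → s (2 ^ (L+1) - x) ≤ s x := by
  intro L
  induction L with
  | zero =>
    intro x h1 h2
    interval_cases x
    · simp
    · simp [hs0]
  | succ L ih =>
    intro x h1 h2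
    have hp : (2:ℕ) ^ (L+1) = 2 * 2 ^ L := by rw [pow_succ]; ring
    have hp2 : (2:ℕ) ^ (L+2) = 2 * 2 ^ (L+1) := by rw [pow_succ]; ring
    rcases Nat.even_or_odd x with ⟨m, hm⟩ | ⟨m, hm⟩
    · subst hm
      have e1 : 2 ^ (L+1+1) - (m + m) = 2 * (2 ^ (L+1) - m) := by omega
      have e3 : m + m = 2 * m := by ring
      rw [e1, e3, heven, heven]
      exact ih m (by omega) (by omega)
    · subst hm
      have hmlo : 2 ^ L ≤ m := by omega
      have hmhi : m + 1 ≤ 2 ^ (L+1) := by omega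
      have e1 : 2 ^ (L+1+1) - (2 * m + 1) = 2 * (2 ^ (L+1) - (m+1)) + 1 := by omega
      rw [e1, hodd, hodd]
      have e4 : 2 ^ (L+1) - (m + 1) + 1 = 2 ^ (L+1) - m := by omega
      rw [e4]
      have h5 := ih m hmlo (by omega)
      have h6 : s (2 ^ (L+1) - (m+1)) ≤ s (m+1) := by
        rcases eq_or_lt_of_le hmhi with h | h
        · have : 2 ^ (L+1) - (m+1) = 0 := by omega
          rw [this, hs0]; exact Nat.zero_le _
        · exact ih (m+1) (by omega) (by omega)
      omega

theorem stmt_16 (s : ℕ → ℕ)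
    (hs0 : s 0 = 0) (hs1 : s 1 = 1)
    (heven : ∀ n : ℕ, s (2 * n) = s n)
    (hodd : ∀ n : ℕ, s (2 * n + 1) = s n + s (n + 1))
    (t x : ℕ) (ht : 1 ≤ t) (hx : 1 ≤ x) (htx : Nat.log 2 x + 2 ≤ t) :
    s (2 ^ t + x) ≤ s x * (t + 1 - Nat.log 2 x) := by
  set L := Nat.log 2 x with hLdef
  have hL1 : 2 ^ L ≤ x := Nat.pow_log_le_self 2 (by omega)
  have hL2 : x < 2 ^ (L+1) := Nat.lt_pow_succ_log_self (by norm_num) x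
  have A := lemA s hs0 hs1 heven hodd
  -- lemma C: growth
  have lemC : ∀ k, s (2 ^ (L+1+k) - x) = s (2 ^ (L+1) - x) + k * s x := by
    intro k
    induction k with
    | zero => simp
    | succ k ihk =>
      have hxle : x ≤ 2 ^ (L+1+k) := le_trans hL2.le (Nat.pow_le_pow_right (by norm_num) (by omega))
      have e1 : 2 ^ (L+1+(k+1)) = 2 ^ (L+1+k) + (2 ^ (L+1+k)) := by
        rw [show L+1+(k+1) = (L+1+k)+1 by ring, pow_succ]; ring
      have e2 : 2 ^ (L+1+(k+1)) - x = 2 ^ (L+1+k) + (2 ^ (L+1+k) - x) := by omega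
      rw [e2, A (L+1+k) (2 ^ (L+1+k) - x) (by omega)]
      have e3 : 2 ^ (L+1+k) - (2 ^ (L+1+k) - x) = x := by omega
      rw [e3, ihk]
      ring
  have hk : t = L + 1 + (t - L - 1) := by omega
  have hxle : x ≤ 2 ^ t := le_trans hL2.le (Nat.pow_le_pow_right (by norm_num) (by omega))
  rw [A t x hxle]
  have := lemC (t - L - 1)
  rw [← hk] at this
  rw [this]
  have hB := lemB s hs0 hs1 heven hodd L x hL1 hL2.le
  have : t + 1 - L = (t - L - 1) + 2 := by omega
  rw [this]
  nlinarith [hB]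
end

section
/- Let m and y be integers with m ≥ 4 and 1 ≤ y ≤ ⌊(m-2)/2⌋. Then L_{m-4y-1} ≤ L_{m-5} and L_{m-4y} ≥ -L_{m-6}, where L denotes the Lucas sequence extended to all integer indices. -/
/-!
Extended to negative indices, the Lucas sequence satisfies `L (-n) = (-1) ^ n * L n`, and it is
positive and increasing from index `1` on (with `L 0 = 2`). So `L n` is negative exactly for odd
`n < 0`, and otherwise `L n = L |n|`. Writing `k = m - 4y - 1` and `j = m - 4y`, the constraint
`2y ≤ m - 2` together with the parity of `m` gives `|k| ≤ m - 5` unless `k = 3 - m` is odd and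
negative, and `-j ≤ m - 6` when `j` is odd and negative; in the remaining cases the signs alone
decide both inequalities.
-/

open Set

section Recurrence

variable {u : ℤ → ℤ}

theorem neg_natCast_eq_neg_one_pow_mul (h : ∀ n, u (n + 2) = u (n + 1) + u n)
    (h1 : u (-1) = -u 1) (n : ℕ) : u (-n) = (-1) ^ n * u n := by
  induction n using Nat.twoStepInduction with
  | zero => simp
  | one => simpa using h1
  | more n ih₀ ih₁ =>
    have hneg := h (-(n + 2 : ℕ))
    have hpos := h n
    push_cast at ih₁ hneg hpos ⊢
    rw [show -((n : ℤ) + 2) + 2 = -n by ring,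
      show -((n : ℤ) + 2) + 1 = -(n + 1) by ring] at hneg
    rw [hpos]
    linear_combination -hneg + ih₀ - ih₁

theorem neg_eq_neg_one_pow_natAbs_mul (h : ∀ n, u (n + 2) = u (n + 1) + u n)
    (h1 : u (-1) = -u 1) (n : ℤ) : u (-n) = (-1) ^ n.natAbs * u n := by
  rcases Int.natAbs_eq n with hn | hn <;> rw [hn]
  · exact neg_natCast_eq_neg_one_pow_mul h h1 _
  · rw [neg_neg, Int.natAbs_neg, Int.natAbs_natCast, neg_natCast_eq_neg_one_pow_mul h h1,
      ← mul_assoc, ← mul_pow, neg_one_mul, neg_neg, one_pow, one_mul]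

theorem monotoneOn_Ici_one_of_add_two (h : ∀ n, u (n + 2) = u (n + 1) + u n)
    (h1 : 0 ≤ u 1) (h2 : u 1 ≤ u 2) : MonotoneOn u (Ici 1) := by
  have step : ∀ n, 1 ≤ n → 0 ≤ u n ∧ u n ≤ u (n + 1) := by
    intro n hn
    induction n, hn using Int.leInduction with
    | base => exact ⟨h1, h2⟩
    | succ n _ ih =>
      have := h n
      rw [show n + 1 + 1 = n + 2 by ring]
      constructor <;> linarith [ih.1, ih.2]
  exact monotoneOn_of_le_add_one ordConnected_Ici fun a _ ha _ => (step a ha).2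

end Recurrence

structure IsLucas (L : ℤ → ℤ) : Prop where
  one : L 1 = 1
  two : L 2 = 3
  add_two : ∀ n, L (n + 2) = L (n + 1) + L n

namespace IsLucas

variable {L : ℤ → ℤ} {n N : ℤ}

theorem zero (hL : IsLucas L) : L 0 = 2 := by
  have := hL.add_two 0
  norm_num [hL.one, hL.two] at this
  linarith

theorem neg_one (hL : IsLucas L) : L (-1) = -1 := by
  have := hL.add_two (-1)
  norm_num [hL.one, hL.zero] at this
  linarith

theorem neg_of_even (hL : IsLucas L) (hn : Even n) : L (-n) = L n := by
  rw [neg_eq_neg_one_pow_natAbs_mul hL.add_two (by rw [hL.neg_one, hL.one]),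
    (Int.natAbs_even.2 hn).neg_one_pow, one_mul]

theorem neg_of_odd (hL : IsLucas L) (hn : Odd n) : L (-n) = -L n := by
  rw [neg_eq_neg_one_pow_natAbs_mul hL.add_two (by rw [hL.neg_one, hL.one]),
    (Int.natAbs_odd.2 hn).neg_one_pow, neg_one_mul]

theorem monotoneOn (hL : IsLucas L) : MonotoneOn L (Ici 1) :=
  monotoneOn_Ici_one_of_add_two hL.add_two (by rw [hL.one]; norm_num)
    (by rw [hL.one, hL.two]; norm_num)

theorem one_le_of_nonneg (hL : IsLucas L) (hn : 0 ≤ n) : 1 ≤ L n := by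
  rcases hn.eq_or_lt with rfl | hn
  · rw [hL.zero]; norm_num
  · simpa [hL.one] using hL.monotoneOn (mem_Ici.2 le_rfl) (mem_Ici.2 hn) hn

theorem one_le_of_even (hL : IsLucas L) (hn : Even n) : 1 ≤ L n := by
  rcases le_total 0 n with hn' | hn'
  · exact hL.one_le_of_nonneg hn'
  · rw [← neg_neg n, hL.neg_of_even hn.neg]
    exact hL.one_le_of_nonneg (neg_nonneg.2 hn')

theorem le_neg_one_of_odd_of_neg (hL : IsLucas L) (hn : Odd n) (hneg : n < 0) : L n ≤ -1 := by
  rw [← neg_neg n, hL.neg_of_odd hn.neg]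
  linarith [hL.one_le_of_nonneg (neg_nonneg.2 hneg.le)]

theorem neg_one_le (hL : IsLucas L) (hn : -2 ≤ n) : -1 ≤ L n := by
  rcases Int.even_or_odd n with he | ho
  · linarith [hL.one_le_of_even he]
  · obtain rfl | hn' : n = -1 ∨ 0 ≤ n := by obtain ⟨t, rfl⟩ := ho; omega
    · rw [hL.neg_one]
    · linarith [hL.one_le_of_nonneg hn']

theorem le_of_abs_le (hL : IsLucas L) (habs : |n| ≤ N) (hpar : Even (N - n)) : L n ≤ L N := by
  obtain ⟨hlo, hhi⟩ := abs_le.1 habs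
  rcases lt_trichotomy n 0 with hneg | rfl | hpos
  · rcases Int.even_or_odd n with he | ho
    · rw [← neg_neg n, hL.neg_of_even he.neg]
      exact hL.monotoneOn (mem_Ici.2 (by omega)) (mem_Ici.2 (by omega)) (by omega)
    · linarith [hL.le_neg_one_of_odd_of_neg ho hneg, hL.one_le_of_nonneg (by omega : 0 ≤ N)]
  · obtain rfl | hN : N = 0 ∨ 2 ≤ N := by obtain ⟨t, ht⟩ := hpar; omega
    · rfl
    · have h2N := hL.monotoneOn (mem_Ici.2 (by norm_num : (1 : ℤ) ≤ 2))
        (mem_Ici.2 (by omega)) hN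
      rw [hL.two] at h2N
      rw [hL.zero]
      linarith
  · exact hL.monotoneOn (mem_Ici.2 hpos) (mem_Ici.2 (by omega)) hhi

end IsLucas

theorem stmt_17_general (L : ℤ → ℤ)
    (hL1 : L 1 = 1) (hL2 : L 2 = 3)
    (hLrec : ∀ n : ℤ, L (n + 2) = L (n + 1) + L n)
    (m y : ℤ) (hy1 : 1 ≤ y) (hy2 : y ≤ (m - 2) / 2) :
    L (m - 4 * y - 1) ≤ L (m - 5) ∧ -L (m - 6) ≤ L (m - 4 * y) := by
  have hL : IsLucas L := ⟨hL1, hL2, hLrec⟩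
  have hy : 2 * y ≤ m - 2 := by omega
  constructor
  · rcases le_or_gt (5 - m) (m - 4 * y - 1) with hk | hk
    · exact hL.le_of_abs_le (abs_le.2 ⟨by omega, by omega⟩) ⟨2 * y - 2, by ring⟩
    · -- here `2 * y = m - 2`, so the index is `3 - m`, odd and negative
      have hodd : Odd (m - 4 * y - 1) := ⟨-y, by omega⟩
      linarith [hL.le_neg_one_of_odd_of_neg hodd (by omega),
        hL.neg_one_le (n := m - 5) (by omega)]
  · have hM : -1 ≤ L (m - 6) := hL.neg_one_le (by omega)
    rcases le_or_gt 0 (m - 4 * y) with hj | hj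
    · linarith [hL.one_le_of_nonneg hj]
    rcases Int.even_or_odd (m - 4 * y) with he | ho
    · linarith [hL.one_le_of_even he]
    · rw [← neg_neg (m - 4 * y), hL.neg_of_odd ho.neg, neg_le_neg_iff]
      obtain ⟨t, ht⟩ := ho
      exact hL.monotoneOn (mem_Ici.2 (by omega)) (mem_Ici.2 (by omega)) (by omega)

theorem stmt_17 (L : ℤ → ℤ)
    (hL1 : L 1 = 1) (hL2 : L 2 = 3)
    (hLrec : ∀ n : ℤ, L (n + 2) = L (n + 1) + L n)
    (m y : ℤ) (hm : 4 ≤ m) (hy1 : 1 ≤ y) (hy2 : y ≤ (m - 2) / 2) :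
    L (m - 4 * y - 1) ≤ L (m - 5) ∧ -L (m - 6) ≤ L (m - 4 * y) :=
  stmt_17_general L hL1 hL2 hLrec m y hy1 hy2
end

section
/- If m and y are integers with m ≥ 4 and 1 ≤ y ≤ ⌊(m-2)/2⌋, then (L_{m-2} + L_{m-4y}) / (5·F_{m-1}) > √5 − 2. Moreover, if m ≥ 4 and m ∉ {5, 7}, then (L_{m-2} + L_{m-4}) / (5·F_{m-1}) ≥ 8/21. -/
/-!
The recurrences force `F = Int.fib` and `L n = fib (n + 1) + fib (n - 1)`. After clearing the
denominator, the first claim reads `A + 10 F_{m-1} > 5√5 F_{m-1}` with `A = L_{m-2} + L_{m-4y}`,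
which is checked by squaring. If `L_{m-4y} ≥ 0` (the index is nonnegative or even), then
`3 L_{m-2} ≥ 4 F_{m-1}` suffices, as `(34/3)² > 125`. Otherwise `m - 4y` is negative and odd, so
`m` is odd, `L_{m-4y} = -L_{4y-m} ≥ -L_{m-6}` and `A ≥ L_{m-2} - L_{m-6} = 5 F_{m-4}`; Cassini's
identity gives `(F_{m-4} + 2 F_{m-1})² = 5 F_{m-1}² + 4`. For the second claim,
`L_{m-2} + L_{m-4} = 5 F_{m-3}` and `21 F_{m-3} - 8 F_{m-1} = F_{m-9}`, which is negative only
for `m = 5, 7`.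
-/

theorem eq_of_fib_recurrence {R : Type*} [AddCommGroup R] {f g : ℤ → R}
    (hf : ∀ n, f (n + 2) = f (n + 1) + f n) (hg : ∀ n, g (n + 2) = g (n + 1) + g n)
    (h1 : f 1 = g 1) (h2 : f 2 = g 2) : f = g := by
  have key : ∀ k : ℤ, f (k + 1) = g (k + 1) ∧ f (k + 2) = g (k + 2) := by
    intro k
    induction k using Int.induction_on with
    | zero => simpa using ⟨h1, h2⟩
    | succ k ih =>
      refine ⟨by rw [add_assoc, one_add_one_eq_two, ih.2], ?_⟩
      rw [hf, hg, add_assoc, one_add_one_eq_two, ih.1, ih.2]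
    | pred k ih =>
      have hf' := hf (-k)
      have hg' := hg (-k)
      rw [ih.1, ih.2] at hf'
      rw [sub_add_cancel, show -(k : ℤ) - 1 + 2 = -k + 1 by ring]
      exact ⟨add_left_cancel (hf'.symm.trans hg'), ih.1⟩
  funext n
  simpa using (key (n - 1)).1

namespace Int

theorem fib_nonneg {n : ℤ} (h : 0 ≤ n ∨ Odd n) : 0 ≤ fib n := by
  rcases h with h | h
  · rw [fib_of_nonneg h]; positivity
  · rw [fib_of_odd h]; positivity

theorem fib_pos_of_pos {n : ℤ} (h : 0 < n) : 0 < fib n := by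
  rw [fib_of_nonneg h.le]
  exact_mod_cast Nat.fib_pos.2 (by omega)

theorem fib_monotoneOn : MonotoneOn fib (Set.Ici 0) := fun a ha b hb hab => by
  rw [fib_of_nonneg ha, fib_of_nonneg hb]
  exact_mod_cast Nat.fib_mono (toNat_le_toNat hab)

theorem fib_add_two_le_three_mul_fib {n : ℤ} (hn : 1 ≤ n) : fib (n + 2) ≤ 3 * fib n := by
  have hmono : fib (n - 1) ≤ fib n := fib_monotoneOn (by grind) (by grind) (by grind)
  have h := fib_add_two (n - 1)
  rw [show n - 1 + 2 = n + 1 by ring, sub_add_cancel] at h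
  rw [fib_add_two]
  linarith

theorem fib_sub_six (n : ℤ) : fib (n - 6) = 21 * fib n - 8 * fib (n + 2) := by
  rw [sub_eq_add_neg, add_comm, fib_add, fib_add_two, show fib (-6 - 1) = 13 by decide,
    show fib (-6) = -8 by decide]
  ring

theorem sq_fib_add_two_mul_fib_add_three {n : ℤ} (hn : Odd n) :
    (fib n + 2 * fib (n + 3)) ^ 2 = 5 * fib (n + 3) ^ 2 + 4 := by
  have cassini := fib_succ_mul_fib_pred_sub_fib_sq (n + 1)
  rw [Even.neg_one_pow (natAbs_even.2 hn.add_one), add_assoc, one_add_one_eq_two,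
    add_sub_cancel_right, fib_add_two] at cassini
  rw [show n + 3 = n + 1 + 2 by ring, fib_add_two, add_assoc, one_add_one_eq_two, fib_add_two]
  linear_combination 4 * cassini

def lucas (n : ℤ) : ℤ := fib (n + 1) + fib (n - 1)

theorem lucas_add_two (n : ℤ) : lucas (n + 2) = lucas (n + 1) + lucas n := by
  have h := fib_add_two (n - 1)
  have h' := fib_add_two (n + 1)
  simp only [lucas] at *
  ring_nf at *
  linarith

theorem lucas_add_one_add_lucas_sub_one (n : ℤ) : lucas (n + 1) + lucas (n - 1) = 5 * fib n := by
  have h := fib_add_two (n - 2)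
  have h' := fib_add_two (n - 1)
  have h'' := fib_add_two n
  simp only [lucas] at *
  ring_nf at *
  linarith

theorem lucas_add_four_sub_lucas (n : ℤ) : lucas (n + 4) - lucas n = 5 * fib (n + 2) := by
  have h := lucas_add_one_add_lucas_sub_one (n + 2)
  have h' := lucas_add_two (n + 2)
  have h'' := lucas_add_two n
  ring_nf at *
  linarith

theorem lucas_neg_of_odd {n : ℤ} (hn : Odd n) : lucas (-n) = -lucas n := by
  have h := fib_neg (n - 1)
  have h' := fib_neg (n + 1)
  rw [if_pos (by grind)] at h h'
  rw [lucas, lucas, show -n + 1 = -(n - 1) by ring, show -n - 1 = -(n + 1) by ring, h, h']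
  ring

theorem lucas_nonneg {n : ℤ} (h : 0 ≤ n ∨ Even n) : 0 ≤ lucas n :=
  add_nonneg (fib_nonneg (by grind)) (fib_nonneg (by grind))

theorem lucas_monotoneOn : MonotoneOn lucas (Set.Ici 1) := fun a ha b hb hab =>
  add_le_add (fib_monotoneOn (by grind) (by grind) (by grind))
    (fib_monotoneOn (by grind) (by grind) (by grind))

end Int

open Int

theorem sqrt_five_sub_two_lt_div {a f : ℤ} (hf : 0 < f) (ha : 0 ≤ a + 10 * f)
    (h : 125 * f ^ 2 < (a + 10 * f) ^ 2) : √5 - 2 < (a : ℝ) / (5 * f) := by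
  have hf' : (0 : ℝ) < f := by exact_mod_cast hf
  have hsq : (√5 * (5 * f)) ^ 2 < ((a + 10 * f : ℤ) : ℝ) ^ 2 := by
    rw [mul_pow, Real.sq_sqrt (by norm_num)]
    exact_mod_cast (by linarith : 5 * (5 * f) ^ 2 < (a + 10 * f) ^ 2)
  have := lt_of_pow_lt_pow_left₀ 2 (by exact_mod_cast ha) hsq
  rw [lt_div_iff₀ (by positivity)]
  push_cast at this
  linarith

theorem sqrt_five_sub_two_lt_lucas_add_lucas_div {m y : ℤ} (hm : 4 ≤ m)
    (hym : y ≤ (m - 2) / 2) :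
    √5 - 2 < ((lucas (m - 2) + lucas (m - 4 * y) : ℤ) : ℝ) / (5 * (fib (m - 1) : ℝ)) := by
  have hf : 0 < fib (m - 1) := fib_pos_of_pos (by omega)
  have hlucas : lucas (m - 2) = fib (m - 1) + fib (m - 3) := by
    rw [lucas]; ring_nf
  by_cases hd : 0 ≤ m - 4 * y ∨ Even (m - 4 * y)
  · have h3 : fib (m - 1) ≤ 3 * fib (m - 3) := by
      simpa [show m - 3 + 2 = m - 1 by ring] using
        fib_add_two_le_three_mul_fib (n := m - 3) (by omega)
    have := lucas_nonneg hd
    refine sqrt_five_sub_two_lt_div hf ?_ ?_ <;> nlinarith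
  · rw [not_or, not_le, not_even_iff_odd, Int.odd_iff] at hd
    have hmodd : Odd (m - 4) := Int.odd_iff.2 (by omega)
    have hlucas_neg : lucas (m - 4 * y) = -lucas (4 * y - m) := by
      rw [← lucas_neg_of_odd (Int.odd_iff.2 (by omega)), neg_sub]
    have hle : lucas (4 * y - m) ≤ lucas (m - 6) :=
      lucas_monotoneOn (by simp; omega) (by simp; omega) (by omega)
    have hdiff := lucas_add_four_sub_lucas (m - 6)
    rw [show m - 6 + 4 = m - 2 by ring, show m - 6 + 2 = m - 4 by ring] at hdiff
    have hcassini := sq_fib_add_two_mul_fib_add_three hmodd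
    rw [show m - 4 + 3 = m - 1 by ring] at hcassini
    have hu : 0 ≤ fib (m - 4) := fib_nonneg (.inr hmodd)
    refine sqrt_five_sub_two_lt_div hf ?_ ?_ <;> nlinarith

theorem eight_div_twentyOne_le_lucas_add_lucas_div {m : ℤ} (hm : 4 ≤ m) (h5 : m ≠ 5)
    (h7 : m ≠ 7) :
    8 / 21 ≤ ((lucas (m - 2) + lucas (m - 4) : ℤ) : ℝ) / (5 * (fib (m - 1) : ℝ)) := by
  have hf : (0 : ℝ) < fib (m - 1) := by exact_mod_cast fib_pos_of_pos (by omega)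
  have hsum := lucas_add_one_add_lucas_sub_one (m - 3)
  rw [show m - 3 + 1 = m - 2 by ring, show m - 3 - 1 = m - 4 by ring] at hsum
  have hfib := fib_sub_six (m - 3)
  rw [show m - 3 - 6 = m - 9 by ring, show m - 3 + 2 = m - 1 by ring] at hfib
  have hnn : 0 ≤ fib (m - 9) := fib_nonneg (by rw [Int.odd_iff]; omega)
  have hle : (8 * fib (m - 1) : ℝ) ≤ 21 * fib (m - 3) := by exact_mod_cast (by linarith)
  rw [hsum, le_div_iff₀ (by positivity)]
  push_cast
  linarith

theorem stmt_18 (F L : ℤ → ℤ)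
    (hF1 : F 1 = 1) (hF2 : F 2 = 1)
    (hFrec : ∀ n : ℤ, F (n + 2) = F (n + 1) + F n)
    (hL1 : L 1 = 1) (hL2 : L 2 = 3)
    (hLrec : ∀ n : ℤ, L (n + 2) = L (n + 1) + L n) :
    (∀ m y : ℤ, 4 ≤ m → 1 ≤ y → y ≤ (m - 2) / 2 →
      ((L (m - 2) + L (m - 4 * y) : ℤ) : ℝ) / (5 * (F (m - 1) : ℝ)) >
        Real.sqrt 5 - 2) ∧
    (∀ m : ℤ, 4 ≤ m → m ≠ 5 → m ≠ 7 →
      ((L (m - 2) + L (m - 4) : ℤ) : ℝ) / (5 * (F (m - 1) : ℝ)) ≥ 8 / 21) := by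
  obtain rfl : F = fib :=
    eq_of_fib_recurrence hFrec (fun n => by rw [fib_add_two, add_comm]) hF1 hF2
  obtain rfl : L = lucas := eq_of_fib_recurrence hLrec lucas_add_two hL1 hL2
  exact ⟨fun m y hm _ hy => sqrt_five_sub_two_lt_lucas_add_lucas_div hm hy,
    fun m hm h5 h7 => eight_div_twentyOne_le_lucas_add_lucas_div hm h5 h7⟩
end
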